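/- Every permutation in S_n belongs to exactly one of the codes C_{0,n}, C_{1,n}, …, C_{n−1,n}; that is, the codes C_{T,n} for T = 0,1,…,n−1 form a partition of S_n. -/

import Mathlib

/-!
`Φ` is a bijection from `V_n` onto `S_n`, so `π` lies in `C_{T,n}` exactly when `T` is congruent
to the parity of the unique `α ∈ V_n` with `Φ(α) = π⁻¹`.
For injectivity, write `Φ(α) = κ_{n-1,a_0} ∘ ⋯ ∘ κ_{1,a_{n-2}} ∘ κ_{0,a_{n-1}}`: every factor but
the last fixes the point `0`, so `Φ(α)⁻¹(0) = κ_{0,a_{n-1}}⁻¹(0)`, which determines `a_{n-1}`;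
cancel that factor and repeat at the point `1`, and so on. Surjectivity then follows from
`|V_n| = n! = |S_n|`.
-/

/-- Underlying function of the suffix block transposition `κ_{i,s}`:
`j ↦ j` for `j < i`, and `j ↦ i + ((j - i + s) mod (n - i))` for `i ≤ j ≤ n-1`. -/
def kappaFun (n i s : ℕ) (j : Fin n) : Fin n :=
  if h : (j : ℕ) < i then j
  else ⟨i + (((j : ℕ) - i + s) % (n - i)), by
    have hj := j.isLt
    have hpos : 0 < n - i := by omega
    have hm := Nat.mod_lt ((j : ℕ) - i + s) hpos
    omega⟩

theorem kappaFun_injective (n i s : ℕ) : Function.Injective (kappaFun n i s) := by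
  intro a b hab
  unfold kappaFun at hab
  by_cases ha : (a : ℕ) < i <;> by_cases hb : (b : ℕ) < i
  · rw [dif_pos ha, dif_pos hb] at hab
    exact hab
  · rw [dif_pos ha, dif_neg hb] at hab
    have h := congrArg Fin.val hab
    simp only at h
    omega
  · rw [dif_neg ha, dif_pos hb] at hab
    have h := congrArg Fin.val hab
    simp only at h
    omega
  · rw [dif_neg ha, dif_neg hb] at hab
    have h := congrArg Fin.val hab
    simp only at h
    have h1 : ((a : ℕ) - i + s) % (n - i) = ((b : ℕ) - i + s) % (n - i) := by omega
    have h2 : ((a : ℕ) - i) % (n - i) = ((b : ℕ) - i) % (n - i) :=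
      Nat.ModEq.add_right_cancel' s h1
    have ha' : (a : ℕ) - i < n - i := by have := a.isLt; omega
    have hb' : (b : ℕ) - i < n - i := by have := b.isLt; omega
    rw [Nat.mod_eq_of_lt ha', Nat.mod_eq_of_lt hb'] at h2
    exact Fin.ext (by omega)

/-- The suffix block transposition `κ_{i,s}` as a permutation of `Fin n`. -/
noncomputable def kappa (n i s : ℕ) : Equiv.Perm (Fin n) :=
  Equiv.ofBijective _ (Finite.injective_iff_bijective.mp (kappaFun_injective n i s))

/-- `V_n`: vectors `[a_0,…,a_{n-1}]` with `1 ≤ a_j ≤ j+1` for each `j`. -/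
def Vn (n : ℕ) : Set (Fin n → ℕ) :=
  {a | ∀ j : Fin n, 1 ≤ a j ∧ a j ≤ (j : ℕ) + 1}

/-- `Φ([a_0,…,a_{n-1}]) = κ_{n-2,a_1} ∘ κ_{n-3,a_2} ∘ ⋯ ∘ κ_{1,a_{n-2}} ∘ κ_{0,a_{n-1}}`
(the factor for `j = 0` is `κ_{n-1,a_0}`, which is the identity permutation). -/
noncomputable def Phi (n : ℕ) (a : Fin n → ℕ) : Equiv.Perm (Fin n) :=
  ((List.finRange n).map (fun (j : Fin n) => kappa n (n - 1 - (j : ℕ)) (a j))).prod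

/-- `W_{T,n}`: vectors in `V_n` whose parity (sum of components) is `≡ T (mod n)`. -/
def Wset (n : ℕ) (T : ℤ) : Set (Fin n → ℕ) :=
  {a | a ∈ Vn n ∧ Int.ModEq (n : ℤ) ((∑ j, a j : ℕ) : ℤ) T}

/-- `C_{T,n} = {(Φ(α))⁻¹ : α ∈ W_{T,n}}`. -/
def Cset (n : ℕ) (T : ℤ) : Set (Equiv.Perm (Fin n)) :=
  {π | ∃ a ∈ Wset n T, π = (Phi n a)⁻¹}

/-- `cinv n π j = π⁻¹(j)` as a natural number (junk value `0` out of range). -/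
def cinv (n : ℕ) (π : Equiv.Perm (Fin n)) (j : ℕ) : ℕ :=
  if h : j < n then (π.symm ⟨j, h⟩ : ℕ) else 0

/-- The `i`-th component of a vector indexed by `Fin n` (junk value `0` out of range). -/
def Rcomp (n : ℕ) (v : Fin n → ℕ) (i : ℕ) : ℕ :=
  if h : i < n then v ⟨i, h⟩ else 0

open Equiv

lemma kappa_apply_of_lt {n i s : ℕ} {x : Fin n} (hx : (x : ℕ) < i) : kappa n i s x = x := by
  change kappaFun n i s x = x
  rw [kappaFun, dif_pos hx]

lemma kappa_apply_val_of_le {n i s : ℕ} {x : Fin n} (hx : i ≤ x) :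
    (kappa n i s x : ℕ) = i + ((x : ℕ) - i + s) % (n - i) := by
  change (kappaFun n i s x : ℕ) = _
  rw [kappaFun, dif_neg (by omega)]

lemma kappa_param_eq_of_apply_eq {n i s s' : ℕ} {y : Fin n} (hy : i ≤ y)
    (hs : s ∈ Set.Icc 1 (n - i)) (hs' : s' ∈ Set.Icc 1 (n - i))
    (h : kappa n i s y = kappa n i s' y) : s = s' := by
  obtain ⟨hs1, hs2⟩ := hs
  obtain ⟨hs1', hs2'⟩ := hs'
  have hval := congrArg Fin.val h
  rw [kappa_apply_val_of_le hy, kappa_apply_val_of_le hy] at hval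
  have hmod : (y - i + 1) + (s - 1) ≡ (y - i + 1) + (s' - 1) [MOD n - i] := by
    unfold Nat.ModEq
    rw [show (y : ℕ) - i + 1 + (s - 1) = y - i + s by omega,
      show (y : ℕ) - i + 1 + (s' - 1) = y - i + s' by omega]
    omega
  have := (Nat.ModEq.add_left_cancel' _ hmod).eq_of_lt_of_lt (by omega) (by omega)
  omega

/-- Both sides send `κ_{x,s}⁻¹ x` to `x`. -/
lemma kappa_param_eq_of_mul_eq {n s s' : ℕ} {x : Fin n} {P P' : Perm (Fin n)}
    (hP : P x = x) (hP' : P' x = x) (hs : s ∈ Set.Icc 1 (n - x))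
    (hs' : s' ∈ Set.Icc 1 (n - x)) (h : P * kappa n x s = P' * kappa n x s') : s = s' := by
  set y := (kappa n x s).symm x
  have hy : kappa n x s y = x := Equiv.apply_symm_apply _ _
  have hy' : kappa n x s' y = x := by
    apply P'.injective
    rw [hP', ← Perm.mul_apply, ← h, Perm.mul_apply, hy, hP]
  have hxy : (x : ℕ) ≤ y := by
    by_contra hlt
    rw [kappa_apply_of_lt (by omega)] at hy
    exact hlt (hy ▸ le_refl _)
  exact kappa_param_eq_of_apply_eq hxy hs hs' (hy.trans hy'.symm)

lemma eq_of_prod_map_kappa_eq {n : ℕ} {a a' : Fin n → ℕ} (ha : a ∈ Vn n) (ha' : a' ∈ Vn n)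
    {js : List (Fin n)} (hjs : js.Pairwise (· < ·))
    (h : (js.map fun j : Fin n => kappa n (n - 1 - j) (a j)).prod =
      (js.map fun j : Fin n => kappa n (n - 1 - j) (a' j)).prod) :
    ∀ j ∈ js, a j = a' j := by
  induction js using List.reverseRecOn with
  | nil => simp
  | append_singleton js j ih =>
    obtain ⟨hjs, -, hlt⟩ := List.pairwise_append.mp hjs
    simp only [List.map_append, List.map_singleton, List.prod_append, List.prod_singleton] at h
    have hrev : n - 1 - (j : ℕ) = j.rev := by rw [Fin.val_rev]; omega
    have hfix : ∀ b : Fin n → ℕ,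
        (js.map fun k : Fin n => kappa n (n - 1 - k) (b k)).prod j.rev = j.rev := by
      intro b
      refine (Subgroup.list_prod_mem (MulAction.stabilizer (Perm (Fin n)) j.rev) ?_ :)
      simp only [List.mem_map]
      rintro _ ⟨k, hk, rfl⟩
      exact kappa_apply_of_lt (by have := hlt k hk j (by simp); rw [← hrev]; omega)
    have hbound : ∀ b ∈ Vn n, b j ∈ Set.Icc 1 (n - j.rev) := fun b hb => by
      have := hb j; rw [Fin.val_rev]; constructor <;> omega
    rw [hrev] at h
    have hj := kappa_param_eq_of_mul_eq (hfix a) (hfix a') (hbound a ha) (hbound a' ha') h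
    rw [hj] at h
    intro k hk
    rcases List.mem_append.mp hk with hk | hk
    · exact ih hjs (mul_right_cancel h) k hk
    · rw [List.mem_singleton.mp hk, hj]

lemma Phi_injOn (n : ℕ) : Set.InjOn (Phi n) (Vn n) := fun _ ha _ ha' h =>
  funext fun j => eq_of_prod_map_kappa_eq ha ha' (List.pairwise_lt_finRange n) h j
    (List.mem_finRange j)

lemma card_pi_fin_succ (n : ℕ) : Fintype.card (∀ j : Fin n, Fin (j + 1)) = n.factorial := by
  simp only [Fintype.card_pi, Fintype.card_fin]
  rw [Fin.prod_univ_eq_prod_range (· + 1), Finset.prod_range_add_one_eq_factorial]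

lemma Phi_surjOn (n : ℕ) : Set.SurjOn (Phi n) (Vn n) Set.univ := by
  let succDigits : (∀ j : Fin n, Fin (j + 1)) → Fin n → ℕ := fun b j => b j + 1
  have hmem : ∀ b, succDigits b ∈ Vn n := fun b j => by
    have := (b j).isLt; dsimp only [succDigits]; omega
  have hinj : Function.Injective (Phi n ∘ succDigits) := fun b b' h =>
    funext fun j => Fin.ext (by
      have := congrFun (Phi_injOn n (hmem b) (hmem b') h) j
      simpa [succDigits] using this)
  have hbij := (Fintype.bijective_iff_injective_and_card _).mpr
    ⟨hinj, by rw [card_pi_fin_succ, Fintype.card_perm, Fintype.card_fin]⟩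
  intro π _
  obtain ⟨b, hb⟩ := hbij.2 π
  exact ⟨succDigits b, hmem b, hb⟩

theorem stmt_5 (n : ℕ) (hn : 2 ≤ n) (π : Equiv.Perm (Fin n)) :
    ∃! T : Fin n, π ∈ Cset n ((T : ℕ) : ℤ) := by
  obtain ⟨a, haV, hπ⟩ := Phi_surjOn n (Set.mem_univ π⁻¹)
  refine ⟨⟨(∑ j, a j) % n, Nat.mod_lt _ (by omega)⟩, ⟨a, ⟨haV, ?_⟩, by rw [hπ, inv_inv]⟩, ?_⟩
  · exact Int.natCast_modEq_iff.mpr (Nat.mod_modEq _ n).symm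
  · rintro T ⟨a', ⟨ha'V, hT⟩, hπ'⟩
    obtain rfl : a' = a := Phi_injOn n ha'V haV (by rw [hπ, hπ', inv_inv])
    exact Fin.ext ((Nat.mod_eq_of_lt T.isLt).symm.trans (Int.natCast_modEq_iff.mp hT).symm)
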